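/- Let Q be a finite quasigroup with |Q| = n, let G be the Latin square graph of Q, and let u, v be adjacent vertices of G. Then the common neighborhood N(u) ∩ N(v) can be partitioned into two sets K and W such that |K| = n − 2, |W| = 2, the set K ∪ {u, v} is a clique of G, and no vertex of W is adjacent to any vertex of K. -/

import Mathlib

/-- The Latin square graph of a (quasi)group-like binary structure `Q`:
vertices are pairs `(a, b) : Q × Q`, and distinct vertices `(a, b)` and `(x, y)`
are adjacent iff `a = x`, or `b = y`, or `a * b = x * y`. -/
def latinSquareGraph (Q : Type*) [Mul Q] : SimpleGraph (Q × Q) where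
  Adj p q := p ≠ q ∧ (p.1 = q.1 ∨ p.2 = q.2 ∨ p.1 * p.2 = q.1 * q.2)
  symm := by
    constructor
    rintro p q ⟨hne, h⟩
    exact ⟨hne.symm, h.imp Eq.symm (Or.imp Eq.symm Eq.symm)⟩
  loopless := ⟨fun p h => h.1 rfl⟩

section Aux

variable {Q : Type*} [Fintype Q] [Mul Q]

omit [Fintype Q] in
lemma lsg_adj {p q : Q × Q} :
    (latinSquareGraph Q).Adj p q ↔
      p ≠ q ∧ (p.1 = q.1 ∨ p.2 = q.2 ∨ p.1 * p.2 = q.1 * q.2) := Iff.rfl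

lemma lsg_goal_aux
    (hleft : ∀ a : Q, Function.Bijective (fun x : Q => a * x))
    (hright : ∀ a : Q, Function.Bijective (fun x : Q => x * a))
    (a b c : Q) (hbc : b ≠ c) :
    ∃ K W : Set (Q × Q),
      K ∪ W = (latinSquareGraph Q).commonNeighbors (a, b) (a, c) ∧
      Disjoint K W ∧
      K.ncard = Fintype.card Q - 2 ∧
      W.ncard = 2 ∧
      (latinSquareGraph Q).IsClique (K ∪ {(a, b), (a, c)}) ∧
      ∀ w ∈ W, ∀ x ∈ K, ¬ (latinSquareGraph Q).Adj w x := by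
  classical
  have lcancel : ∀ z x y : Q, z * x = z * y → x = y := fun z x y h => (hleft z).1 h
  have rcancel : ∀ z x y : Q, x * z = y * z → x = y := fun z x y h => (hright z).1 h
  obtain ⟨x1, hx1⟩ := (hright b).2 (a * c)
  obtain ⟨x2, hx2⟩ := (hright c).2 (a * b)
  simp only [] at hx1 hx2
  have hx1a : x1 ≠ a := by rintro rfl; exact hbc (lcancel _ _ _ hx1)
  have hx2a : x2 ≠ a := by rintro rfl; exact hbc (lcancel _ _ _ hx2.symm)
  refine ⟨{p | p.1 = a ∧ p.2 ≠ b ∧ p.2 ≠ c}, {(x1, b), (x2, c)}, ?_, ?_, ?_, ?_, ?_, ?_⟩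
  · ext ⟨x, y⟩
    simp only [Set.mem_union, Set.mem_setOf_eq, Set.mem_insert_iff, Set.mem_singleton_iff,
      SimpleGraph.mem_commonNeighbors, lsg_adj, ne_eq, Prod.mk.injEq, not_and]
    constructor
    · rintro (⟨rfl, hyb, hyc⟩ | ⟨rfl, rfl⟩ | ⟨rfl, rfl⟩)
      · exact ⟨⟨fun _ h => hyb h.symm, Or.inl rfl⟩, fun _ h => hyc h.symm, Or.inl rfl⟩
      · exact ⟨⟨fun h => absurd h.symm hx1a, Or.inr (Or.inl rfl)⟩,
          fun h => absurd h.symm hx1a, Or.inr (Or.inr hx1.symm)⟩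
      · exact ⟨⟨fun h => absurd h.symm hx2a, Or.inr (Or.inr hx2.symm)⟩,
          fun h => absurd h.symm hx2a, Or.inr (Or.inl rfl)⟩
    · rintro ⟨⟨hne1, h1⟩, hne2, h2⟩
      rcases h1 with h1 | h1 | h1 <;> rcases h2 with h2 | h2 | h2
      · exact Or.inl ⟨h1.symm, fun h => hne1 h1 h.symm, fun h => hne2 h2 h.symm⟩
      · exact absurd h2 (hne2 h1)
      · rw [← h1] at h2
        exact absurd (lcancel _ _ _ h2) (hne2 h1)
      · exact absurd h1 (hne1 h2)
      · exact absurd (h1.trans h2.symm) hbc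
      · have hxx : x * b = x1 * b := by rw [hx1, h2, ← h1]
        exact Or.inr (Or.inl ⟨rcancel _ _ _ hxx, h1.symm⟩)
      · rw [← h2] at h1
        exact absurd (lcancel _ _ _ h1) (hne1 h2)
      · have hxx : x * c = x2 * c := by rw [hx2, h1, ← h2]
        exact Or.inr (Or.inr ⟨rcancel _ _ _ hxx, h2.symm⟩)
      · exact absurd (lcancel _ _ _ (h1.trans h2.symm)) hbc
  · rw [Set.disjoint_left]
    rintro ⟨x, y⟩ ⟨_, hyb, hyc⟩ (h | h)
    · exact hyb (congrArg Prod.snd h)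
    · exact hyc (congrArg Prod.snd h)
  · have himg : {p : Q × Q | p.1 = a ∧ p.2 ≠ b ∧ p.2 ≠ c} =
        (fun y => (a, y)) '' ({b, c} : Set Q)ᶜ := by
      ext ⟨x, y⟩
      simp only [Set.mem_setOf_eq, Set.mem_image, Set.mem_compl_iff, Set.mem_insert_iff,
        Set.mem_singleton_iff, Prod.mk.injEq, not_or]
      constructor
      · rintro ⟨rfl, h1, h2⟩; exact ⟨y, ⟨h1, h2⟩, rfl, rfl⟩
      · rintro ⟨z, ⟨h1, h2⟩, rfl, rfl⟩; exact ⟨rfl, h1, h2⟩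
    rw [himg, Set.ncard_image_of_injective _ (fun y z h => congrArg Prod.snd h)]
    have h1 := Set.ncard_add_ncard_compl ({b, c} : Set Q)
    rw [Set.ncard_pair hbc, Nat.card_eq_fintype_card] at h1
    omega
  · exact Set.ncard_pair (fun h => hbc (congrArg Prod.snd h))
  · intro p hp q hq hne
    have hp1 : p.1 = a := by
      rcases hp with ⟨h, _⟩ | h | h
      · exact h
      · rw [h]
      · rw [h]
    have hq1 : q.1 = a := by
      rcases hq with ⟨h, _⟩ | h | h
      · exact h
      · rw [h]
      · rw [h]
    exact ⟨hne, Or.inl (hp1.trans hq1.symm)⟩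
  · rintro w (rfl | rfl) ⟨x, y⟩ ⟨rfl, hyb, hyc⟩ ⟨hne, (h | h | h)⟩
    · exact hx1a h
    · exact hyb h.symm
    · exact hyc (lcancel x c y (hx1.symm.trans h)).symm
    · exact hx2a h
    · exact hyc h.symm
    · exact hyb (lcancel x b y (hx2.symm.trans h)).symm


lemma lsg_goal_aux2
    (hleft : ∀ a : Q, Function.Bijective (fun x : Q => a * x))
    (hright : ∀ a : Q, Function.Bijective (fun x : Q => x * a))
    (a b c : Q) (hbc : b ≠ c) :
    ∃ K W : Set (Q × Q),
      K ∪ W = (latinSquareGraph Q).commonNeighbors (b, a) (c, a) ∧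
      Disjoint K W ∧
      K.ncard = Fintype.card Q - 2 ∧
      W.ncard = 2 ∧
      (latinSquareGraph Q).IsClique (K ∪ {(b, a), (c, a)}) ∧
      ∀ w ∈ W, ∀ x ∈ K, ¬ (latinSquareGraph Q).Adj w x := by
  classical
  have lcancel : ∀ z x y : Q, z * x = z * y → x = y := fun z x y h => (hleft z).1 h
  have rcancel : ∀ z x y : Q, x * z = y * z → x = y := fun z x y h => (hright z).1 h
  obtain ⟨y1, hy1⟩ := (hleft b).2 (c * a)
  obtain ⟨y2, hy2⟩ := (hleft c).2 (b * a)
  simp only [] at hy1 hy2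
  have hy1a : y1 ≠ a := by rintro rfl; exact hbc (rcancel _ _ _ hy1)
  have hy2a : y2 ≠ a := by rintro rfl; exact hbc (rcancel _ _ _ hy2.symm)
  refine ⟨{p | p.2 = a ∧ p.1 ≠ b ∧ p.1 ≠ c}, {(b, y1), (c, y2)}, ?_, ?_, ?_, ?_, ?_, ?_⟩
  · ext ⟨x, y⟩
    simp only [Set.mem_union, Set.mem_setOf_eq, Set.mem_insert_iff, Set.mem_singleton_iff,
      SimpleGraph.mem_commonNeighbors, lsg_adj, ne_eq, Prod.mk.injEq, not_and]
    constructor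
    · rintro (⟨rfl, hxb, hxc⟩ | ⟨rfl, rfl⟩ | ⟨rfl, rfl⟩)
      · exact ⟨⟨fun h => absurd h.symm hxb, Or.inr (Or.inl rfl)⟩,
          fun h => absurd h.symm hxc, Or.inr (Or.inl rfl)⟩
      · exact ⟨⟨fun _ h => hy1a h.symm, Or.inl rfl⟩,
          fun h => absurd h.symm hbc, Or.inr (Or.inr hy1.symm)⟩
      · exact ⟨⟨fun h => absurd h hbc, Or.inr (Or.inr hy2.symm)⟩,
          fun _ h => hy2a h.symm, Or.inl rfl⟩
    · rintro ⟨⟨hne1, h1⟩, hne2, h2⟩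
      rcases h1 with h1 | h1 | h1 <;> rcases h2 with h2 | h2 | h2
      · exact absurd (h1.trans h2.symm) hbc
      · exact absurd h2 (hne1 h1)
      · rw [← h1] at h2
        exact Or.inr (Or.inl ⟨h1.symm, (lcancel _ _ _ (hy1.trans h2)).symm⟩)
      · exact absurd h1 (hne2 h2)
      · exact Or.inl ⟨h1.symm, fun h => hne1 h.symm h1, fun h => hne2 h.symm h2⟩
      · rw [← h1] at h2
        exact absurd h1 (hne2 (rcancel _ _ _ h2))
      · rw [← h2] at h1
        exact Or.inr (Or.inr ⟨h2.symm, (lcancel _ _ _ (hy2.trans h1)).symm⟩)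
      · rw [← h2] at h1
        exact absurd h2 (hne1 (rcancel _ _ _ h1))
      · exact absurd (rcancel _ _ _ (h1.trans h2.symm)) hbc
  · rw [Set.disjoint_left]
    rintro ⟨x, y⟩ ⟨_, hxb, hxc⟩ (h | h)
    · exact hxb (congrArg Prod.fst h)
    · exact hxc (congrArg Prod.fst h)
  · have himg : {p : Q × Q | p.2 = a ∧ p.1 ≠ b ∧ p.1 ≠ c} =
        (fun x => (x, a)) '' ({b, c} : Set Q)ᶜ := by
      ext ⟨x, y⟩
      simp only [Set.mem_setOf_eq, Set.mem_image, Set.mem_compl_iff, Set.mem_insert_iff,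
        Set.mem_singleton_iff, Prod.mk.injEq, not_or]
      constructor
      · rintro ⟨rfl, h1, h2⟩; exact ⟨x, ⟨h1, h2⟩, rfl, rfl⟩
      · rintro ⟨z, ⟨h1, h2⟩, rfl, rfl⟩; exact ⟨rfl, h1, h2⟩
    rw [himg, Set.ncard_image_of_injective _ (fun y z h => congrArg Prod.fst h)]
    have h1 := Set.ncard_add_ncard_compl ({b, c} : Set Q)
    rw [Set.ncard_pair hbc, Nat.card_eq_fintype_card] at h1
    omega
  · exact Set.ncard_pair (fun h => hbc (congrArg Prod.fst h))
  · intro p hp q hq hne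
    have hp1 : p.2 = a := by
      rcases hp with ⟨h, _⟩ | h | h
      · exact h
      · rw [h]
      · rw [h]
    have hq1 : q.2 = a := by
      rcases hq with ⟨h, _⟩ | h | h
      · exact h
      · rw [h]
      · rw [h]
    exact ⟨hne, Or.inr (Or.inl (hp1.trans hq1.symm))⟩
  · rintro w (rfl | rfl) ⟨x, y⟩ ⟨rfl, hxb, hxc⟩ ⟨hne, (h | h | h)⟩
    · exact hxb h.symm
    · exact hy1a h
    · exact hxc (rcancel _ _ _ (hy1.symm.trans h)).symm
    · exact hxc h.symm
    · exact hy2a h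
    · exact hxb (rcancel _ _ _ (hy2.symm.trans h)).symm

lemma lsg_goal_aux3
    (hleft : ∀ a : Q, Function.Bijective (fun x : Q => a * x))
    (hright : ∀ a : Q, Function.Bijective (fun x : Q => x * a))
    (a b c d : Q) (hac : a ≠ c) (hbd : b ≠ d) (hcd : a * b = c * d) :
    ∃ K W : Set (Q × Q),
      K ∪ W = (latinSquareGraph Q).commonNeighbors (a, b) (c, d) ∧
      Disjoint K W ∧
      K.ncard = Fintype.card Q - 2 ∧
      W.ncard = 2 ∧
      (latinSquareGraph Q).IsClique (K ∪ {(a, b), (c, d)}) ∧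
      ∀ w ∈ W, ∀ x ∈ K, ¬ (latinSquareGraph Q).Adj w x := by
  classical
  have lcancel : ∀ z x y : Q, z * x = z * y → x = y := fun z x y h => (hleft z).1 h
  have rcancel : ∀ z x y : Q, x * z = y * z → x = y := fun z x y h => (hright z).1 h
  set S : Set (Q × Q) := {p | p.1 * p.2 = a * b} with hS
  have hgmem : ∀ p : Q × Q, p ∈ S ↔ p.1 * p.2 = a * b := fun _ => Iff.rfl
  have huS : (a, b) ∈ S := rfl
  have hvS : (c, d) ∈ S := hcd.symm
  refine ⟨S \ {(a, b), (c, d)}, {(a, d), (c, b)}, ?_, ?_, ?_, ?_, ?_, ?_⟩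
  · ext ⟨x, y⟩
    simp only [Set.mem_union, Set.mem_diff, hS, Set.mem_setOf_eq, Set.mem_insert_iff,
      Set.mem_singleton_iff, SimpleGraph.mem_commonNeighbors, lsg_adj, ne_eq, Prod.mk.injEq,
      not_or, not_and]
    constructor
    · rintro (⟨hprod, hnu, hnv⟩ | ⟨rfl, rfl⟩ | ⟨rfl, rfl⟩)
      · exact ⟨⟨fun h1 h2 => hnu h1.symm h2.symm, Or.inr (Or.inr hprod.symm)⟩,
          fun h1 h2 => hnv h1.symm h2.symm, Or.inr (Or.inr (hcd.symm.trans hprod.symm))⟩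
      · exact ⟨⟨fun _ h => hbd h, Or.inl rfl⟩,
          fun h => absurd h.symm hac, Or.inr (Or.inl rfl)⟩
      · exact ⟨⟨fun h => absurd h hac, Or.inr (Or.inl rfl)⟩,
          fun _ h => hbd h.symm, Or.inl rfl⟩
    · rintro ⟨⟨hne1, h1⟩, hne2, h2⟩
      rcases h1 with h1 | h1 | h1 <;> rcases h2 with h2 | h2 | h2
      · exact absurd (h1.trans h2.symm) hac
      · exact Or.inr (Or.inl ⟨h1.symm, h2.symm⟩)
      · rw [← h1] at h2
        exact absurd (lcancel _ _ _ (hcd.trans h2)) (hne1 h1)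
      · exact Or.inr (Or.inr ⟨h2.symm, h1.symm⟩)
      · exact absurd (h1.trans h2.symm) hbd
      · rw [← h1] at h2
        exact absurd h1 (hne1 (rcancel _ _ _ (hcd.trans h2)))
      · rw [← h2] at h1
        exact absurd (lcancel _ _ _ (hcd.symm.trans h1)) (hne2 h2)
      · rw [← h2] at h1
        exact absurd h2 (hne2 (rcancel _ _ _ (hcd.symm.trans h1)))
      · exact Or.inl ⟨h1.symm, fun hxa hyb => hne1 hxa.symm hyb.symm,
          fun hxc hyd => hne2 hxc.symm hyd.symm⟩
  · rw [Set.disjoint_left]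
    rintro p ⟨hprod, _⟩ (rfl | rfl)
    · have hh : a * d = a * b := hprod
      exact hbd (lcancel _ _ _ hh).symm
    · have hh : c * b = a * b := hprod
      exact hac (rcancel _ _ _ hh).symm
  · have hsub : ({(a, b), (c, d)} : Set (Q × Q)) ⊆ S := by
      rintro p (rfl | rfl)
      · exact huS
      · exact hvS
    have hcardS : S.ncard = Fintype.card Q := by
      set g : Q → Q := fun x => Classical.choose ((hleft x).2 (a * b)) with hg
      have hgspec : ∀ x : Q, x * g x = a * b := fun x =>
        Classical.choose_spec ((hleft x).2 (a * b))
      have hrange : S = Set.range (fun x => (x, g x)) := by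
        ext ⟨x, y⟩
        constructor
        · intro h
          exact ⟨x, Prod.ext rfl (lcancel _ _ _ ((hgspec x).trans h.symm))⟩
        · rintro ⟨z, hz⟩
          rw [← hz]
          exact hgspec z
      rw [hrange, ← Set.image_univ,
        Set.ncard_image_of_injective _ (fun x y h => congrArg Prod.fst h),
        Set.ncard_univ, Nat.card_eq_fintype_card]
    rw [Set.ncard_diff hsub, hcardS,
      Set.ncard_pair (show ((a, b) : Q × Q) ≠ (c, d) from fun h => hac (congrArg Prod.fst h))]
  · exact Set.ncard_pair (fun h => hac (congrArg Prod.fst h))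
  · intro p hp q hq hne
    have hp1 : p.1 * p.2 = a * b := by
      rcases hp with ⟨h, _⟩ | h | h
      · exact h
      · rw [h]
      · rw [h]; exact hcd.symm
    have hq1 : q.1 * q.2 = a * b := by
      rcases hq with ⟨h, _⟩ | h | h
      · exact h
      · rw [h]
      · rw [h]; exact hcd.symm
    exact ⟨hne, Or.inr (Or.inr (hp1.trans hq1.symm))⟩
  · rintro w (rfl | rfl) ⟨x, y⟩ ⟨hprod, hnotin⟩ ⟨hne, (h | h | h)⟩
    · replace h : a = x := h
      obtain rfl := h
      replace hprod : a * y = a * b := hprod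
      obtain rfl := lcancel _ _ _ hprod
      exact hnotin (Set.mem_insert _ _)
    · replace h : d = y := h
      obtain rfl := h
      replace hprod : x * d = a * b := hprod
      obtain rfl := rcancel _ _ _ (hprod.trans hcd)
      exact hnotin (Set.mem_insert_iff.mpr (Or.inr rfl))
    · replace h : a * d = x * y := h
      replace hprod : x * y = a * b := hprod
      exact hbd (lcancel _ _ _ (h.trans hprod)).symm
    · replace h : c = x := h
      obtain rfl := h
      replace hprod : c * y = a * b := hprod
      obtain rfl := lcancel _ _ _ (hprod.trans hcd)
      exact hnotin (Set.mem_insert_iff.mpr (Or.inr rfl))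
    · replace h : b = y := h
      obtain rfl := h
      replace hprod : x * b = a * b := hprod
      obtain rfl := rcancel _ _ _ hprod
      exact hnotin (Set.mem_insert _ _)
    · replace h : c * b = x * y := h
      replace hprod : x * y = a * b := hprod
      exact hac (rcancel _ _ _ (h.trans hprod)).symm

end Aux

/-- Let `Q` be a finite quasigroup with `|Q| = n`, let `G` be the Latin square graph of `Q`,
and let `u, v` be adjacent vertices of `G`.  Then the common neighborhood `N(u) ∩ N(v)` can be
partitioned into sets `K` and `W` with `|K| = n - 2` and `|W| = 2` such that `K ∪ {u, v}` is a
clique of `G` and no vertex of `W` is adjacent to any vertex of `K`. -/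
theorem latinSquareGraph_commonNeighbors_partition (Q : Type*) [Fintype Q] [Mul Q]
    (hleft : ∀ a : Q, Function.Bijective (fun x : Q => a * x))
    (hright : ∀ a : Q, Function.Bijective (fun x : Q => x * a))
    (n : ℕ) (hn : Fintype.card Q = n)
    (u v : Q × Q) (huv : (latinSquareGraph Q).Adj u v) :
    ∃ K W : Set (Q × Q),
      K ∪ W = (latinSquareGraph Q).commonNeighbors u v ∧
      Disjoint K W ∧
      K.ncard = n - 2 ∧
      W.ncard = 2 ∧
      (latinSquareGraph Q).IsClique (K ∪ {u, v}) ∧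
      ∀ w ∈ W, ∀ x ∈ K, ¬ (latinSquareGraph Q).Adj w x := by
  subst hn
  obtain ⟨a, b⟩ := u
  obtain ⟨x, y⟩ := v
  obtain ⟨hne, h⟩ := huv
  have lcancel : ∀ z x y : Q, z * x = z * y → x = y := fun z x y h => (hleft z).1 h
  have rcancel : ∀ z x y : Q, x * z = y * z → x = y := fun z x y h => (hright z).1 h
  rcases h with h | h | h
  · obtain rfl : a = x := h
    exact lsg_goal_aux hleft hright a b y
      (fun hby => hne (by rw [show b = y from hby]))
  · obtain rfl : b = y := h
    exact lsg_goal_aux2 hleft hright b a x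
      (fun hax => hne (by rw [show a = x from hax]))
  · have hax : a ≠ x := fun hh => hne (Prod.ext hh (lcancel _ _ _ (by rw [← hh] at h; exact h)))
    have hby : b ≠ y := fun hh => hne (Prod.ext (rcancel _ _ _ (by rw [← hh] at h; exact h)) hh)
    exact lsg_goal_aux3 hleft hright a b x y hax hby h
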